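/- Main theorem (almost all pairs are almost equidistanced): for any ε > 0 there exists an absolute, effectively computable constant A(ε) such that whenever p is an odd prime and N is a positive integer with N > A(ε) and p > A(ε), one has (1/#B(p,N)²)·#{(α,β) ∈ B(p,N)×B(p,N) : |𝔡_{p,N}(α,β) − 1/√6| > ε} < ε. -/

import Mathlib

/-!
Write `α - β = ∑ cᵢ ω^(i+1)` with `cᵢ = aᵢ - bᵢ`. Since `Tr(ω^e)` is `p - 1` or `-1` according as
`p ∣ e` or not, `Tr((α - β) ω^(p-1-i)) = p cᵢ - ∑ c`, whence
`𝔡(α, β)² = (p² ∑ cᵢ² - (p + 1) (∑ cᵢ)²) / (4 N² p² (p - 1))`.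
For `(α, β)` uniform on `B(p,N)²` the `cᵢ` are independent and centred with `E cᵢ² = 2N(N+1)/3`,
so the main term concentrates at `E cᵢ² / (4N²) = 1/6 + 1/(6N)`. Chebyshev's inequality for
`∑ (cᵢ² - E cᵢ²)` and Markov's inequality for `(∑ cᵢ)²` show that, once `N > 1/(2ε²)`,
`|𝔡² - 1/6| > ε²` holds for a proportion at most `9 / (ε⁴ (p - 1)) + 6 / (ε² p)` of the pairs, and
`|𝔡 - 1/√6| ≤ √|𝔡² - 1/6|`.
-/

/-- The cyclotomic norm: `‖α‖ = √(Σ_{j=1}^{p−1} Tr(α·ω^j)²)`. -/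
noncomputable def cycNorm (p : ℕ) {K : Type*} [Field K] [Algebra ℚ K] (ω : K) (α : K) : ℝ :=
  Real.sqrt (∑ j ∈ Finset.Icc 1 (p - 1), ((Algebra.trace ℚ K (α * ω ^ j) : ℚ) : ℝ) ^ 2)

/-- The metric induced by the cyclotomic norm: `d(α, β) = ‖α − β‖`. -/
noncomputable def cycDist (p : ℕ) {K : Type*} [Field K] [Algebra ℚ K] (ω : K) (α β : K) : ℝ :=
  cycNorm p ω (α - β)

/-- The box `B(p,N) = {a₁ω + ⋯ + a_{p−1}ω^{p−1} : aᵢ ∈ ℤ, −N ≤ aᵢ ≤ N}` as a finset of `K`. -/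
noncomputable def cycBox (p : ℕ) {K : Type*} [Field K] [Algebra ℚ K] (ω : K) (N : ℕ) :
    Finset K :=
  letI := Classical.decEq K
  (Fintype.piFinset fun _ : Fin (p - 1) => Finset.Icc (-(N : ℤ)) (N : ℤ)).image
    fun a => ∑ i : Fin (p - 1), (a i : K) * ω ^ ((i : ℕ) + 1)

/-- The normalized distance `𝔡_{p,N}(α,β) = d(α,β)/(2Np√(p−1))`. -/
noncomputable def cycNormDist (p : ℕ) {K : Type*} [Field K] [Algebra ℚ K] (ω : K) (N : ℕ)
    (α β : K) : ℝ :=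
  cycDist p ω α β / (2 * N * p * Real.sqrt ((p : ℝ) - 1))

open Finset

namespace Fintype

variable {ι κ : Type*} [Fintype ι] [DecidableEq ι] {s : Finset κ} {f : κ → ℝ}

theorem sum_piFinset_apply_mul_apply_eq_zero (hf : ∑ c ∈ s, f c = 0) {i j : ι} (hij : i ≠ j) :
    ∑ g ∈ piFinset fun _ : ι ↦ s, f (g i) * f (g j) = 0 := by
  have hprod : ∀ g : ι → κ,
      f (g i) * f (g j) = ∏ k, if k ∈ ({i, j} : Finset ι) then f (g k) else 1 := fun g ↦ by
    rw [prod_ite_mem, prod_pair hij]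
  simp only [hprod]
  rw [sum_prod_piFinset s fun k c ↦ if k ∈ ({i, j} : Finset ι) then f c else 1]
  exact prod_eq_zero (mem_univ i) (by simp [hf])

theorem sum_piFinset_sq_sum_apply (hf : ∑ c ∈ s, f c = 0) :
    ∑ g ∈ piFinset fun _ : ι ↦ s, (∑ i, f (g i)) ^ 2
      = card ι * #s ^ (card ι - 1) * ∑ c ∈ s, f c ^ 2 := by
  simp_rw [sq, sum_mul_sum]
  rw [sum_comm]
  have hdiag : ∀ i j : ι, ∑ g ∈ piFinset fun _ : ι ↦ s, f (g i) * f (g j)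
      = if i = j then #s ^ (card ι - 1) * ∑ c ∈ s, f c * f c else 0 := fun i j ↦ by
    split_ifs with hij
    · rw [hij, sum_piFinset_apply (fun c ↦ f c * f c), nsmul_eq_mul, Nat.cast_pow]
    · exact sum_piFinset_apply_mul_apply_eq_zero hf hij
  have hswap : ∀ i, ∑ g ∈ piFinset (fun _ : ι ↦ s), ∑ j, f (g i) * f (g j)
      = ∑ j, ∑ g ∈ piFinset fun _ : ι ↦ s, f (g i) * f (g j) := fun i ↦ sum_comm
  simp only [hswap, hdiag, sum_ite_eq, sum_const, card_univ, nsmul_eq_mul]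
  ring

theorem card_filter_lt_sq_sum_apply_mul_le (hf : ∑ c ∈ s, f c = 0) {B : ℝ}
    (hB : ∀ c ∈ s, f c ^ 2 ≤ B) (t : ℝ) :
    #{g ∈ piFinset fun _ : ι ↦ s | t < (∑ i, f (g i)) ^ 2} * t ≤ card ι * B * #s ^ card ι := by
  calc #{g ∈ piFinset fun _ : ι ↦ s | t < (∑ i, f (g i)) ^ 2} * t
      ≤ ∑ g ∈ piFinset fun _ : ι ↦ s with t < (∑ i, f (g i)) ^ 2, (∑ i, f (g i)) ^ 2 := by
        rw [← nsmul_eq_mul]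
        exact card_nsmul_le_sum _ _ _ fun g hg ↦ (mem_filter.1 hg).2.le
    _ ≤ ∑ g ∈ piFinset fun _ : ι ↦ s, (∑ i, f (g i)) ^ 2 :=
        sum_le_sum_of_subset_of_nonneg (filter_subset _ _) fun _ _ _ ↦ sq_nonneg _
    _ = card ι * #s ^ (card ι - 1) * ∑ c ∈ s, f c ^ 2 := sum_piFinset_sq_sum_apply hf
    _ ≤ card ι * #s ^ (card ι - 1) * (#s * B) := by
        gcongr
        simpa using sum_le_sum hB
    _ = card ι * B * #s ^ card ι := by
        rcases Nat.eq_zero_or_pos (card ι) with h | h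
        · simp [h]
        · rw [← Nat.sub_add_cancel h, pow_succ]
          simp only [Nat.add_sub_cancel]
          ring

end Fintype

theorem Finset.sum_product_sub_eq_zero {α : Type*} (s : Finset α) (g : α → ℝ) :
    ∑ x ∈ s ×ˢ s, (g x.1 - g x.2) = 0 := by
  simp [sum_product, sum_sub_distrib, smul_sum]

theorem Finset.sum_product_sub_sq {α : Type*} (s : Finset α) (g : α → ℝ) :
    ∑ x ∈ s ×ˢ s, (g x.1 - g x.2) ^ 2 = 2 * #s * ∑ a ∈ s, g a ^ 2 - 2 * (∑ a ∈ s, g a) ^ 2 := by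
  simp only [sum_product, sub_sq, sum_add_distrib, sum_sub_distrib, sum_const, nsmul_eq_mul,
    ← mul_sum, ← sum_mul, sq (∑ a ∈ s, g a)]
  ring

theorem sum_Icc_neg_intCast (N : ℕ) : ∑ a ∈ Icc (-(N : ℤ)) N, (a : ℝ) = 0 := by
  have hneg : ∑ a ∈ Icc (-(N : ℤ)) N, (a : ℝ) = ∑ a ∈ Icc (-(N : ℤ)) N, -(a : ℝ) :=
    sum_nbij' (- ·) (- ·) (by simp; omega) (by simp; omega) (by simp) (by simp) (by simp)
  rw [sum_neg_distrib] at hneg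
  linarith

theorem sum_Icc_neg_intCast_sq (N : ℕ) :
    ∑ a ∈ Icc (-(N : ℤ)) N, (a : ℝ) ^ 2 = N * (N + 1) * (2 * N + 1) / 3 := by
  induction N with
  | zero => simp
  | succ n ih =>
    have hIcc : Icc (-((n + 1 : ℕ) : ℤ)) (n + 1 : ℕ)
        = insert (-(n + 1 : ℤ)) (insert (n + 1 : ℤ) (Icc (-(n : ℤ)) n)) := by
      ext x
      simp only [mem_Icc, mem_insert]
      omega
    rw [hIcc, sum_insert (by simp; omega), sum_insert (by simp), ih]
    push_cast
    ring

theorem sum_Icc_neg_product_sub_sq_sub_eq_zero (N : ℕ) :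
    ∑ x ∈ Icc (-(N : ℤ)) N ×ˢ Icc (-(N : ℤ)) N, (((x.1 : ℝ) - x.2) ^ 2 - 2 * N * (N + 1) / 3)
      = 0 := by
  rw [sum_sub_distrib, sum_product_sub_sq (Icc (-(N : ℤ)) N) (fun a : ℤ ↦ (a : ℝ)),
    sum_Icc_neg_intCast, sum_Icc_neg_intCast_sq, sum_const, card_product, Int.card_Icc,
    show ((N : ℤ) + 1 - -N).toNat = 2 * N + 1 by omega, nsmul_eq_mul]
  push_cast
  ring

theorem sub_sq_le_of_mem_Icc_neg {N : ℕ} {a b : ℤ} (ha : a ∈ Icc (-(N : ℤ)) N)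
    (hb : b ∈ Icc (-(N : ℤ)) N) : ((a : ℝ) - b) ^ 2 ≤ 4 * N ^ 2 := by
  rw [mem_Icc] at ha hb
  have ha' : -(N : ℝ) ≤ a ∧ (a : ℝ) ≤ N := ⟨by exact_mod_cast ha.1, by exact_mod_cast ha.2⟩
  have hb' : -(N : ℝ) ≤ b ∧ (b : ℝ) ≤ N := ⟨by exact_mod_cast hb.1, by exact_mod_cast hb.2⟩
  nlinarith

theorem sub_sq_sub_sq_le_of_mem_Icc_neg {N : ℕ} {a b : ℤ} (ha : a ∈ Icc (-(N : ℤ)) N)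
    (hb : b ∈ Icc (-(N : ℤ)) N) : (((a : ℝ) - b) ^ 2 - 2 * N * (N + 1) / 3) ^ 2 ≤ 16 * N ^ 4 := by
  have hd := sub_sq_le_of_mem_Icc_neg ha hb
  have hN : (N : ℝ) ≤ N ^ 2 := by exact_mod_cast Nat.le_self_pow two_ne_zero N
  have hm : 0 ≤ 2 * (N : ℝ) * (N + 1) / 3 := by positivity
  refine (sq_le_sq' (b := 4 * (N : ℝ) ^ 2) ?_ ?_).trans_eq (by ring)
  · nlinarith [sq_nonneg ((a : ℝ) - b)]
  · linarith

theorem Real.abs_sqrt_sub_sqrt_le (x : ℝ) {y : ℝ} (hy : 0 ≤ y) : |√x - √y| ≤ √|x - y| := by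
  apply Real.abs_le_sqrt
  rcases le_total x 0 with hx | hx
  · rw [Real.sqrt_eq_zero'.2 hx, zero_sub, neg_sq, Real.sq_sqrt hy, abs_sub_comm]
    exact le_abs.2 (Or.inl (by linarith))
  · have hfac : x - y = (√x - √y) * (√x + √y) := by
      rw [mul_comm, ← sq_sub_sq, Real.sq_sqrt hx, Real.sq_sqrt hy]
    have hle : |√x - √y| ≤ √x + √y := by
      simpa [abs_of_nonneg (Real.sqrt_nonneg _)] using abs_sub (√x) (√y)
    rw [hfac, abs_mul, abs_of_nonneg (by positivity : 0 ≤ √x + √y), ← sq_abs, sq]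
    exact mul_le_mul_of_nonneg_left hle (abs_nonneg _)

theorem Real.sq_lt_abs_sub_of_lt_abs_sqrt_sub {ε x y : ℝ} (hε : 0 ≤ ε) (hy : 0 ≤ y)
    (h : ε < |√x - √y|) : ε ^ 2 < |x - y| :=
  (Real.lt_sqrt hε).1 (h.trans_le (Real.abs_sqrt_sub_sqrt_le x hy))

theorem sum_mul_sub_sum_sq {n : ℕ} (d : Fin n → ℝ) (q : ℝ) :
    ∑ i, (q * d i - ∑ k, d k) ^ 2 = q ^ 2 * ∑ i, d i ^ 2 - (2 * q - n) * (∑ k, d k) ^ 2 := by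
  simp only [sub_sq, mul_pow, sum_add_distrib, sum_sub_distrib, ← mul_sum, ← sum_mul, sum_const,
    card_univ, Fintype.card_fin, nsmul_eq_mul]
  ring

theorem lt_sq_or_lt_sq_of_far_from_sixth {ε N p X S : ℝ} (hε : 0 < ε)
    (hN : 1 / (2 * ε ^ 2) < N) (hp : 1 < p)
    (hfar : ε ^ 2 < |(p ^ 2 * X - (p + 1) * S ^ 2) / (4 * N ^ 2 * p ^ 2 * (p - 1)) - 1 / 6|) :
    (4 / 3 * ε ^ 2 * N ^ 2 * (p - 1)) ^ 2 < (X - (p - 1) * (2 * N * (N + 1) / 3)) ^ 2 ∨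
      2 / 3 * ε ^ 2 * N ^ 2 * p * (p - 1) < S ^ 2 := by
  have hN0 : 0 < N := lt_trans (by positivity) hN
  have hn : 0 < p - 1 := by linarith
  set D := 4 * N ^ 2 * p ^ 2 * (p - 1) with hD
  have hD0 : 0 < D := by positivity
  set Y := X - (p - 1) * (2 * N * (N + 1) / 3)
  -- `(p - 1) * (2N(N+1)/3) / D = 1/6 + 1/(6N)` is where the limit `1/6` comes from.
  have hsplit : (p ^ 2 * X - (p + 1) * S ^ 2) / D - 1 / 6
      = Y / (4 * N ^ 2 * (p - 1)) + 1 / (6 * N) - (p + 1) * S ^ 2 / D := by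
    rw [hD]
    field_simp
    ring
  have hNε : 1 / (6 * N) < ε ^ 2 / 3 := by
    rw [div_lt_iff₀ (by positivity)] at hN
    rw [div_lt_div_iff₀ (by positivity) (by norm_num)]
    linarith
  by_contra! hnear
  obtain ⟨hY, hS⟩ := hnear
  have hYbd : |Y / (4 * N ^ 2 * (p - 1))| ≤ ε ^ 2 / 3 := by
    have h4 : 0 < 4 * N ^ 2 * (p - 1) := mul_pos (by positivity) hn
    rw [abs_div, abs_of_pos h4, div_le_iff₀ h4]
    calc |Y| ≤ 4 / 3 * ε ^ 2 * N ^ 2 * (p - 1) :=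
          abs_le_of_sq_le_sq hY (mul_nonneg (by positivity) hn.le)
      _ = ε ^ 2 / 3 * (4 * N ^ 2 * (p - 1)) := by ring
  have hSbd : (p + 1) * S ^ 2 / D ≤ ε ^ 2 / 3 := by
    rw [div_le_iff₀ hD0, hD]
    have := mul_le_mul_of_nonneg_left hS (by linarith : (0 : ℝ) ≤ p + 1)
    nlinarith [mul_nonneg (mul_nonneg (sq_nonneg ε) (sq_nonneg N)) (mul_nonneg hn.le hn.le)]
  have hS0 : 0 ≤ (p + 1) * S ^ 2 / D := by positivity
  have hN6 : 0 < 1 / (6 * N) := by positivity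
  rw [hsplit] at hfar
  obtain ⟨hYlo, hYhi⟩ := abs_le.1 hYbd
  exact hfar.not_ge (abs_le.2 ⟨by linarith, by linarith⟩)

namespace IsPrimitiveRoot

open Polynomial

variable {p : ℕ} {K : Type*} [Field K] [Algebra ℚ K] [IsCyclotomicExtension {p} ℚ K] {η : K}

theorem trace_eq_neg_one_of_prime (hp : p.Prime) (hη : IsPrimitiveRoot η p) :
    Algebra.trace ℚ K η = -1 := by
  have := Fact.mk hp
  have hdeg : (cyclotomic p ℚ).natDegree = p - 1 := by
    rw [natDegree_cyclotomic, Nat.totient_prime hp]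
  have hpos : 0 < (cyclotomic p ℚ).natDegree := by
    have := hp.two_le
    omega
  rw [← hη.powerBasis_gen ℚ, PowerBasis.trace_gen_eq_nextCoeff_minpoly, hη.powerBasis_gen ℚ,
    ← hη.minpoly_eq_cyclotomic_of_irreducible (cyclotomic.irreducible_rat hp.pos),
    nextCoeff_of_natDegree_pos hpos, hdeg, cyclotomic_prime, finsetSum_coeff]
  simp only [coeff_X_pow, sum_ite_eq, mem_range]
  rw [if_pos (by have := hp.two_le; omega)]

theorem trace_pow_of_prime (hp : p.Prime) (hη : IsPrimitiveRoot η p) (e : ℕ) :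
    Algebra.trace ℚ K (η ^ e) = if p ∣ e then (p - 1 : ℚ) else -1 := by
  have := NeZero.of_pos hp.pos
  split_ifs with he
  · rw [(hη.pow_eq_one_iff_dvd e).2 he, ← map_one (algebraMap ℚ K), Algebra.trace_algebraMap,
      IsCyclotomicExtension.finrank K (cyclotomic.irreducible_rat hp.pos), Nat.totient_prime hp,
      nsmul_eq_mul, mul_one, Nat.cast_sub hp.one_le, Nat.cast_one]
  · exact (hη.pow_of_coprime e ((hp.coprime_iff_not_dvd.2 he).symm)).trace_eq_neg_one_of_prime hp

end IsPrimitiveRoot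

theorem Finset.sum_Icc_one_eq_sum_fin_sub {M : Type*} [AddCommMonoid M] (n : ℕ) (F : ℕ → M) :
    ∑ j ∈ Icc 1 n, F j = ∑ i : Fin n, F (n - i) := by
  rw [Fin.sum_univ_eq_sum_range (fun i ↦ F (n - i))]
  refine sum_nbij' (n - ·) (n - ·) (by simp; omega) (by simp; omega) (by simp; omega)
    (by simp; omega) fun j hj ↦ ?_
  rw [Nat.sub_sub_self (mem_Icc.1 hj).2]

section Cyclotomic

variable {K : Type*} [Field K]

def cycLinComb (p : ℕ) (ω : K) (c : Fin (p - 1) → ℤ) : K :=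
  ∑ i, (c i : K) * ω ^ ((i : ℕ) + 1)

theorem cycLinComb_sub (p : ℕ) (ω : K) (a b : Fin (p - 1) → ℤ) :
    cycLinComb p ω a - cycLinComb p ω b = cycLinComb p ω (a - b) := by
  simp only [cycLinComb, ← sum_sub_distrib, Pi.sub_apply, Int.cast_sub, sub_mul]

variable [Algebra ℚ K] {p : ℕ} {ω : K}

theorem mem_cycBox {N : ℕ} {α : K} :
    α ∈ cycBox p ω N ↔
      ∃ a ∈ Fintype.piFinset fun _ ↦ Icc (-(N : ℤ)) N, cycLinComb p ω a = α := by
  classical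
  rw [cycBox, mem_image]
  rfl

theorem ncard_pairs_cycBox_le (N : ℕ) (P : K × K → Prop) [DecidablePred P] :
    {ab : K × K | ab.1 ∈ cycBox p ω N ∧ ab.2 ∈ cycBox p ω N ∧ P ab}.ncard
      ≤ #{g ∈ Fintype.piFinset fun _ : Fin (p - 1) ↦ Icc (-(N : ℤ)) N ×ˢ Icc (-(N : ℤ)) N |
          P (cycLinComb p ω fun i ↦ (g i).1, cycLinComb p ω fun i ↦ (g i).2)} := by
  classical
  refine (Set.ncard_le_ncard (t := ↑(image (fun g : Fin (p - 1) → ℤ × ℤ ↦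
    (cycLinComb p ω fun i ↦ (g i).1, cycLinComb p ω fun i ↦ (g i).2)) _)) ?_
    (finite_toSet _)).trans ((Set.ncard_coe_finset _).trans_le card_image_le)
  rintro ⟨α, β⟩ ⟨hα, hβ, hP⟩
  obtain ⟨a, ha, rfl⟩ := mem_cycBox.1 hα
  obtain ⟨b, hb, rfl⟩ := mem_cycBox.1 hβ
  refine mem_image.2 ⟨fun i ↦ (a i, b i), mem_filter.2 ⟨?_, hP⟩, rfl⟩
  simp only [Fintype.mem_piFinset, mem_product] at ha hb ⊢
  exact fun i ↦ ⟨ha i, hb i⟩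

variable [IsCyclotomicExtension {p} ℚ K]

theorem trace_cycLinComb_mul_pow (hp : p.Prime) (hω : IsPrimitiveRoot ω p)
    (c : Fin (p - 1) → ℤ) (i : Fin (p - 1)) :
    Algebra.trace ℚ K (cycLinComb p ω c * ω ^ (p - 1 - i)) = p * c i - ∑ k, (c k : ℚ) := by
  have hdvd : ∀ k : Fin (p - 1), p ∣ k + 1 + (p - 1 - i) ↔ k = i := fun k ↦ by
    refine ⟨fun ⟨m, hm⟩ ↦ ?_, fun hk ↦ ⟨1, by omega⟩⟩
    rcases m with _ | _ | m
    · omega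
    · ext; omega
    · have := Nat.mul_le_mul_left p (show 2 ≤ m + 1 + 1 by omega)
      omega
  have hterm : ∀ k : Fin (p - 1),
      Algebra.trace ℚ K ((c k : K) * ω ^ ((k : ℕ) + 1) * ω ^ (p - 1 - i))
        = (if k = i then (p : ℚ) * c k else 0) - c k := fun k ↦ by
    rw [mul_assoc, ← pow_add, ← map_intCast (algebraMap ℚ K), ← Algebra.smul_def, map_smul,
      hω.trace_pow_of_prime hp, smul_eq_mul]
    simp only [hdvd]
    split_ifs <;> ring
  simp only [cycLinComb, sum_mul, map_sum, hterm, sum_sub_distrib, sum_ite_eq', mem_univ, if_true]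

theorem cycNorm_cycLinComb (hp : p.Prime) (hω : IsPrimitiveRoot ω p) (c : Fin (p - 1) → ℤ) :
    cycNorm p ω (cycLinComb p ω c) = √(∑ i, ((p : ℝ) * c i - ∑ k, (c k : ℝ)) ^ 2) := by
  rw [cycNorm, sum_Icc_one_eq_sum_fin_sub]
  simp only [trace_cycLinComb_mul_pow hp hω]
  push_cast
  rfl

theorem cycLinComb_injective (hp : p.Prime) (hω : IsPrimitiveRoot ω p) :
    Function.Injective (cycLinComb p ω) := by
  -- If `cycLinComb p ω c = 0` then every trace `p cᵢ - ∑ c` vanishes, which forces `c = 0`.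
  intro a b hab
  have hconst : ∀ i, (p : ℚ) * (a - b) i = ∑ k, ((a - b) k : ℚ) := fun i ↦ by
    have h := trace_cycLinComb_mul_pow hp hω (a - b) i
    rw [← cycLinComb_sub, hab, sub_self, zero_mul, map_zero] at h
    linarith
  have hsum : ∑ k, ((a - b) k : ℚ) = 0 := by
    have h := sum_congr rfl fun i (_ : i ∈ univ) ↦ hconst i
    rw [← mul_sum, sum_const, card_univ, Fintype.card_fin, nsmul_eq_mul,
      Nat.cast_sub hp.one_le, Nat.cast_one] at h
    linear_combination h
  funext i
  have h := hconst i
  rw [hsum, mul_eq_zero, Nat.cast_eq_zero] at h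
  exact sub_eq_zero.1 (by exact_mod_cast h.resolve_left hp.ne_zero)

theorem card_cycBox (hp : p.Prime) (hω : IsPrimitiveRoot ω p) (N : ℕ) :
    #(cycBox p ω N) = #(Icc (-(N : ℤ)) N) ^ (p - 1) := by
  classical
  have hinj : Function.Injective fun a : Fin (p - 1) → ℤ ↦ ∑ i, (a i : K) * ω ^ ((i : ℕ) + 1) :=
    cycLinComb_injective hp hω
  rw [cycBox, card_image_of_injective _ hinj, Fintype.card_piFinset,
    prod_const, card_univ, Fintype.card_fin]

theorem cycNormDist_cycLinComb (hp : p.Prime) (hω : IsPrimitiveRoot ω p) (N : ℕ)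
    (a b : Fin (p - 1) → ℤ) :
    cycNormDist p ω N (cycLinComb p ω a) (cycLinComb p ω b)
      = √((p ^ 2 * ∑ i, ((a i : ℝ) - b i) ^ 2 - (p + 1) * (∑ i, ((a i : ℝ) - b i)) ^ 2)
        / (4 * N ^ 2 * p ^ 2 * (p - 1))) := by
  have hp1 : (0 : ℝ) ≤ p - 1 := sub_nonneg.2 (by exact_mod_cast hp.one_le)
  have hden : √(4 * N ^ 2 * p ^ 2 * ((p : ℝ) - 1)) = 2 * N * p * √((p : ℝ) - 1) := by
    rw [show 4 * N ^ 2 * p ^ 2 * ((p : ℝ) - 1) = (2 * N * p) ^ 2 * (p - 1) by ring,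
      Real.sqrt_mul (by positivity), Real.sqrt_sq (by positivity)]
  rw [Real.sqrt_div' _ (mul_nonneg (by positivity) hp1), hden, cycNormDist, cycDist,
    cycLinComb_sub, cycNorm_cycLinComb hp hω]
  push_cast [Pi.sub_apply]
  rw [sum_mul_sub_sum_sq, Nat.cast_sub hp.one_le]
  ring_nf

theorem lt_sq_or_lt_sq_of_far_cycLinComb (hp : p.Prime) (hω : IsPrimitiveRoot ω p) {ε : ℝ}
    (hε : 0 < ε) {N : ℕ} (hN : 1 / (2 * ε ^ 2) < N) (a b : Fin (p - 1) → ℤ)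
    (hfar : ε < |cycNormDist p ω N (cycLinComb p ω a) (cycLinComb p ω b) - 1 / √6|) :
    (4 / 3 * ε ^ 2 * N ^ 2 * (p - 1)) ^ 2
        < (∑ i, (((a i : ℝ) - b i) ^ 2 - 2 * N * (N + 1) / 3)) ^ 2 ∨
      2 / 3 * ε ^ 2 * N ^ 2 * p * (p - 1) < (∑ i, ((a i : ℝ) - b i)) ^ 2 := by
  rw [cycNormDist_cycLinComb hp hω, show (1 : ℝ) / √6 = √(1 / 6) by
    rw [Real.sqrt_div' _ (by norm_num), Real.sqrt_one]] at hfar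
  rw [sum_sub_distrib, sum_const, card_univ, Fintype.card_fin, nsmul_eq_mul,
    Nat.cast_sub hp.one_le, Nat.cast_one]
  exact lt_sq_or_lt_sq_of_far_from_sixth hε hN (by exact_mod_cast hp.one_lt)
    (Real.sq_lt_abs_sub_of_lt_abs_sqrt_sub hε.le (by norm_num) hfar)

theorem card_far_coeff_pairs_lt (hp : p.Prime) (hω : IsPrimitiveRoot ω p) {ε : ℝ} (hε : 0 < ε)
    {N : ℕ} (hN : 1 / (2 * ε ^ 2) < N) (hn : 18 / ε ^ 5 < (p : ℝ) - 1) (hp' : 12 / ε ^ 3 < p) :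
    (#{g ∈ Fintype.piFinset fun _ : Fin (p - 1) ↦ Icc (-(N : ℤ)) N ×ˢ Icc (-(N : ℤ)) N |
        ε < |cycNormDist p ω N (cycLinComb p ω fun i ↦ (g i).1)
          (cycLinComb p ω fun i ↦ (g i).2) - 1 / √6|} : ℝ)
      < ε * #(Icc (-(N : ℤ)) N ×ˢ Icc (-(N : ℤ)) N) ^ (p - 1) := by
  set C := Icc (-(N : ℤ)) N
  set M : ℝ := #(C ×ˢ C) ^ (p - 1)
  set t₁ : ℝ := 4 / 3 * ε ^ 2 * N ^ 2 * (p - 1)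
  set t₂ : ℝ := 2 / 3 * ε ^ 2 * N ^ 2 * p * (p - 1)
  have hN0 : (0 : ℝ) < N := lt_trans (by positivity) hN
  have hn0 : (0 : ℝ) < p - 1 := lt_trans (by positivity) hn
  have hM : 0 < M := pow_pos (Nat.cast_pos.2 (card_pos.2 ⟨(0, 0), by simp [C]⟩)) _
  have hcard : ((p - 1 : ℕ) : ℝ) = p - 1 := by
    rw [Nat.cast_sub hp.one_le, Nat.cast_one]
  have h₁ := Fintype.card_filter_lt_sq_sum_apply_mul_le (ι := Fin (p - 1))
    (sum_Icc_neg_product_sub_sq_sub_eq_zero N)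
    (fun x hx ↦ sub_sq_sub_sq_le_of_mem_Icc_neg (mem_product.1 hx).1 (mem_product.1 hx).2) (t₁ ^ 2)
  have h₂ := Fintype.card_filter_lt_sq_sum_apply_mul_le (ι := Fin (p - 1))
    (sum_product_sub_eq_zero C (fun a ↦ (a : ℝ)))
    (fun x hx ↦ sub_sq_le_of_mem_Icc_neg (mem_product.1 hx).1 (mem_product.1 hx).2) t₂
  rw [Fintype.card_fin, hcard] at h₁ h₂
  -- The two exceptional proportions are `9 / (ε⁴ (p - 1))` and `6 / (ε² p)`; the hypotheses
  -- `hn` and `hp'` make each of them less than `ε / 2`.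
  have hbound₁ : (p - 1) * (16 * N ^ 4) * M < ε / 2 * M * t₁ ^ 2 := by
    rw [div_lt_iff₀ (by positivity)] at hn
    have key : ε / 2 * M * t₁ ^ 2 - (p - 1) * (16 * N ^ 4) * M
        = 8 / 9 * ((p - 1) * N ^ 4 * M) * (ε ^ 5 * (p - 1) - 18) := by ring
    linarith [mul_pos (mul_pos (mul_pos hn0 (pow_pos hN0 4)) hM)
      (by linarith : 0 < ε ^ 5 * (p - 1) - 18)]
  have hbound₂ : (p - 1) * (4 * N ^ 2) * M < ε / 2 * M * t₂ := by
    rw [div_lt_iff₀ (by positivity)] at hp'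
    have key : ε / 2 * M * t₂ - (p - 1) * (4 * N ^ 2) * M
        = 1 / 3 * ((p - 1) * N ^ 2 * M) * (ε ^ 3 * p - 12) := by ring
    linarith [mul_pos (mul_pos (mul_pos hn0 (pow_pos hN0 2)) hM)
      (by linarith : 0 < ε ^ 3 * p - 12)]
  have hF₁ := lt_of_mul_lt_mul_right (h₁.trans_lt hbound₁) (sq_nonneg t₁)
  have hF₂ := lt_of_mul_lt_mul_right (h₂.trans_lt hbound₂) (by positivity)
  refine (Nat.cast_le.2 (card_le_card (monotone_filter_right _ fun _ _ hfar ↦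
    lt_sq_or_lt_sq_of_far_cycLinComb hp hω hε hN _ _ hfar))).trans_lt ?_
  rw [filter_or]
  refine (Nat.cast_le.2 (card_union_le _ _)).trans_lt ?_
  push_cast
  exact (add_lt_add hF₁ hF₂).trans_eq (by ring)

end Cyclotomic

/-- Main theorem: for every `ε > 0` there is an absolute constant `A(ε)` such that for
`p, N > A(ε)` the proportion of pairs `(α,β) ∈ B(p,N)²` with
`|𝔡_{p,N}(α,β) − 1/√6| > ε` is less than `ε`. -/
theorem stmt15 :
    ∀ ε : ℝ, 0 < ε →
      ∃ A : ℝ,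
        ∀ (p : ℕ+), (p : ℕ).Prime → Odd (p : ℕ) →
          ∀ (K : Type) [Field K] [Algebra ℚ K] [IsCyclotomicExtension {(p : ℕ)} ℚ K],
            ∀ ω : K, IsPrimitiveRoot ω p →
              ∀ N : ℕ, 0 < N → A < (N : ℝ) → A < (p : ℝ) →
                (({ab : K × K | ab.1 ∈ cycBox p ω N ∧ ab.2 ∈ cycBox p ω N ∧
                      |cycNormDist p ω N ab.1 ab.2 - 1 / Real.sqrt 6| > ε}.ncard : ℝ)
                    / ((cycBox p ω N).card : ℝ) ^ 2)
                  < ε := by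
  intro ε hε
  refine ⟨1 + 1 / (2 * ε ^ 2) + 18 / ε ^ 5 + 12 / ε ^ 3, ?_⟩
  intro p hp _ K _ _ _ ω hω N _ hAN hAp
  have h₁ : 0 < 1 / (2 * ε ^ 2) := by positivity
  have h₂ : 0 < 18 / ε ^ 5 := by positivity
  have h₃ : 0 < 12 / ε ^ 3 := by positivity
  have hbox : (#(cycBox (p : ℕ) ω N) : ℝ) ^ 2
      = #(Icc (-(N : ℤ)) N ×ˢ Icc (-(N : ℤ)) N) ^ ((p : ℕ) - 1) := by
    rw [card_cycBox hp hω, card_product]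
    push_cast
    ring
  have hpos : (0 : ℝ) < #(cycBox (p : ℕ) ω N) ^ 2 :=
    pow_pos (Nat.cast_pos.2 (card_pos.2 ⟨0, mem_cycBox.2 ⟨0, by simp, by simp [cycLinComb]⟩⟩)) 2
  rw [div_lt_iff₀ hpos, hbox]
  exact (Nat.cast_le.2 (ncard_pairs_cycBox_le N _)).trans_lt
    (card_far_coeff_pairs_lt hp hω hε (by linarith) (by linarith) (by linarith))
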